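/- Let p = (p_1, p_2, ...) and q = (q_1, q_2, ...) be probability distributions on ℕ with entries in nonincreasing order such that p majorizes q (i.e., Σ_{i=1}^k p_i ≥ Σ_{i=1}^k q_i for all k). Then the Shannon entropy satisfies H(p) ≤ H(q). -/

import Mathlib

/-!
While `qᵢ > 0`, concavity of `η = negMulLog` gives `η pᵢ ≤ η qᵢ + (-log qᵢ - 1) (pᵢ - qᵢ)`.
The weights `-log qᵢ` increase because `q` is nonincreasing, and the partial sums of `p - q` are
nonnegative by majorization, so Abel summation bounds the correction over `i < m` by
`-log q_m · ∑_{i<m} (pᵢ - qᵢ) ≤ -log q_m · ∑_{i≥m} qᵢ ≤ ∑_{i≥m} η qᵢ`. Hence every partial sum of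
`H(p)` is at most `H(q)`. If `q` vanishes from some index `N` on, majorization forces `p` to
vanish there too, and the comparison at `m = N` needs no tail.
-/

open Finset Real

lemma negMulLog_le_tangent {x y : ℝ} (hx : 0 ≤ x) (hy : 0 < y) :
    negMulLog x ≤ negMulLog y + (-log y - 1) * (x - y) := by
  have hxy : x = y * (x / y) := by field_simp
  have h := negMulLog_le_one_sub_self (div_nonneg hx hy.le)
  calc negMulLog x = x / y * negMulLog y + y * negMulLog (x / y) := by
        rw [← negMulLog_mul, ← hxy]
    _ ≤ x / y * negMulLog y + y * (1 - x / y) := by gcongr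
    _ = negMulLog y + (-log y - 1) * (x - y) := by
        simp only [negMulLog]; field_simp; ring

lemma neg_log_mul_le_negMulLog {x y : ℝ} (hx : 0 ≤ x) (hxy : x ≤ y) :
    -log y * x ≤ negMulLog x := by
  rcases hx.eq_or_lt with rfl | hx
  · simp
  · rw [negMulLog, neg_mul, neg_mul, mul_comm]
    exact neg_le_neg (mul_le_mul_of_nonneg_left (log_le_log hx hxy) hx.le)

lemma sum_range_mul_le_mul_sum_range {c d : ℕ → ℝ} {m : ℕ} {C : ℝ}
    (hc : MonotoneOn c (Set.Iio m)) (hd : ∀ k ≤ m, 0 ≤ ∑ i ∈ range k, d i)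
    (hC : ∀ i < m, c i ≤ C) :
    ∑ i ∈ range m, c i * d i ≤ C * ∑ i ∈ range m, d i := by
  induction m generalizing C with
  | zero => simp
  | succ m ih =>
    have hcm : ∀ i < m, c i ≤ c m := fun i hi =>
      hc (Set.mem_Iio.2 (by omega)) (Set.mem_Iio.2 (by omega)) hi.le
    have h := ih (hc.mono (Set.Iio_subset_Iio m.le_succ)) (fun k hk => hd k (by omega)) hcm
    have hm : c m * ∑ i ∈ range (m + 1), d i ≤ C * ∑ i ∈ range (m + 1), d i :=
      mul_le_mul_of_nonneg_right (hC m (by omega)) (hd _ le_rfl)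
    simp only [sum_range_succ] at hm ⊢
    linarith

lemma sum_range_negMulLog_le_of_majorizes {p q : ℕ → ℝ} {m : ℕ} {C : ℝ} (hp0 : ∀ i, 0 ≤ p i)
    (hqa : Antitone q) (hmaj : ∀ k ≤ m, ∑ i ∈ range k, q i ≤ ∑ i ∈ range k, p i)
    (hq : ∀ i < m, 0 < q i) (hC : ∀ i < m, -log (q i) ≤ C) :
    ∑ i ∈ range m, negMulLog (p i) ≤
      ∑ i ∈ range m, negMulLog (q i) + C * (∑ i ∈ range m, p i - ∑ i ∈ range m, q i) := by
  have hd : ∀ k ≤ m, 0 ≤ ∑ i ∈ range k, (p i - q i) := fun k hk => by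
    rw [sum_sub_distrib]; linarith [hmaj k hk]
  have hc : MonotoneOn (fun i => -log (q i)) (Set.Iio m) := fun i _ j hj hij =>
    neg_le_neg (log_le_log (hq j hj) (hqa hij))
  have habel := sum_range_mul_le_mul_sum_range hc hd hC
  have htangent : ∑ i ∈ range m, negMulLog (p i) ≤
      ∑ i ∈ range m, (negMulLog (q i) + -log (q i) * (p i - q i) - (p i - q i)) :=
    sum_le_sum fun i hi => by
      linarith [negMulLog_le_tangent (hp0 i) (hq i (mem_range.1 hi))]
  simp only [sum_sub_distrib, sum_add_distrib] at htangent habel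
  linarith [hmaj m le_rfl]

lemma le_one_of_tsum_eq_one {α : Type*} {f : α → ℝ} (hf0 : ∀ i, 0 ≤ f i) (hf : Summable f)
    (hf1 : ∑' i, f i = 1) (i : α) : f i ≤ 1 :=
  hf1 ▸ hf.le_tsum i fun j _ => hf0 j

lemma sum_ofReal_negMulLog_eq {α : Type*} {f : α → ℝ} (hf0 : ∀ i, 0 ≤ f i) (hf : Summable f)
    (hf1 : ∑' i, f i = 1) (s : Finset α) :
    ∑ i ∈ s, ENNReal.ofReal (negMulLog (f i)) = ENNReal.ofReal (∑ i ∈ s, negMulLog (f i)) :=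
  (ENNReal.ofReal_sum_of_nonneg fun i _ =>
    negMulLog_nonneg (hf0 i) (le_one_of_tsum_eq_one hf0 hf hf1 i)).symm

lemma ofReal_neg_log_mul_tsum_le {α : Type*} {f : α → ℝ} {y : ℝ} (hf0 : ∀ i, 0 ≤ f i)
    (hfy : ∀ i, f i ≤ y) (hy0 : 0 ≤ y) (hy1 : y ≤ 1) (hf : Summable f) :
    ENNReal.ofReal (-log y * ∑' i, f i) ≤ ∑' i, ENNReal.ofReal (negMulLog (f i)) := by
  have hlog : 0 ≤ -log y := neg_nonneg.2 (log_nonpos hy0 hy1)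
  rw [← tsum_mul_left, ENNReal.ofReal_tsum_of_nonneg (fun i => mul_nonneg hlog (hf0 i))
    (hf.mul_left _)]
  exact ENNReal.tsum_le_tsum fun i =>
    ENNReal.ofReal_le_ofReal (neg_log_mul_le_negMulLog (hf0 i) (hfy i))

lemma sum_range_ofReal_negMulLog_le_of_pos {p q : ℕ → ℝ} (hp0 : ∀ i, 0 ≤ p i)
    (hq0 : ∀ i, 0 ≤ q i) (hqa : Antitone q) (hps : Summable p) (hqs : Summable q)
    (hp1 : ∑' i, p i = 1) (hq1 : ∑' i, q i = 1)
    (hmaj : ∀ k, ∑ i ∈ range k, q i ≤ ∑ i ∈ range k, p i) {m : ℕ} (hqm : 0 < q m) :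
    ∑ i ∈ range m, ENNReal.ofReal (negMulLog (p i)) ≤
      ∑' i, ENNReal.ofReal (negMulLog (q i)) := by
  set S := ∑ i ∈ range m, p i - ∑ i ∈ range m, q i
  set T := ∑' i, q (i + m)
  have hS : S ≤ T := by
    have hpm : ∑ i ∈ range m, p i ≤ 1 := hp1 ▸ hps.sum_le_tsum _ fun i _ => hp0 i
    linarith [hq1 ▸ hqs.sum_add_tsum_nat_add m]
  have hqm1 : q m ≤ 1 := le_one_of_tsum_eq_one hq0 hqs hq1 m
  have hlog : 0 ≤ -log (q m) := neg_nonneg.2 (log_nonpos hqm.le hqm1)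
  have hfin := sum_range_negMulLog_le_of_majorizes (C := -log (q m)) hp0 hqa
    (fun k _ => hmaj k) (fun i hi => hqm.trans_le (hqa hi.le))
    (fun i hi => neg_le_neg (log_le_log hqm (hqa hi.le)))
  have htail : ENNReal.ofReal (-log (q m) * T) ≤ ∑' i, ENNReal.ofReal (negMulLog (q (i + m))) :=
    ofReal_neg_log_mul_tsum_le (fun i => hq0 _) (fun i => hqa (Nat.le_add_left m i)) hqm.le hqm1
      ((summable_nat_add_iff m).2 hqs)
  calc ∑ i ∈ range m, ENNReal.ofReal (negMulLog (p i))
      = ENNReal.ofReal (∑ i ∈ range m, negMulLog (p i)) :=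
        sum_ofReal_negMulLog_eq hp0 hps hp1 _
    _ ≤ ENNReal.ofReal (∑ i ∈ range m, negMulLog (q i) + -log (q m) * T) :=
        ENNReal.ofReal_le_ofReal (hfin.trans (by gcongr))
    _ ≤ ENNReal.ofReal (∑ i ∈ range m, negMulLog (q i)) + ENNReal.ofReal (-log (q m) * T) :=
        ENNReal.ofReal_add_le
    _ ≤ ∑ i ∈ range m, ENNReal.ofReal (negMulLog (q i)) +
          ∑' i, ENNReal.ofReal (negMulLog (q (i + m))) := by
        rw [sum_ofReal_negMulLog_eq hq0 hqs hq1]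
        gcongr
    _ = ∑' i, ENNReal.ofReal (negMulLog (q i)) :=
        ENNReal.summable.sum_add_tsum_nat_add'

lemma tsum_ofReal_negMulLog_le_of_eq_zero {p q : ℕ → ℝ} (hp0 : ∀ i, 0 ≤ p i)
    (hq0 : ∀ i, 0 ≤ q i) (hqa : Antitone q) (hps : Summable p) (hqs : Summable q)
    (hp1 : ∑' i, p i = 1) (hq1 : ∑' i, q i = 1)
    (hmaj : ∀ k, ∑ i ∈ range k, q i ≤ ∑ i ∈ range k, p i) {N : ℕ} (hqN : q N = 0)
    (hq : ∀ i < N, 0 < q i) :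
    ∑' i, ENNReal.ofReal (negMulLog (p i)) ≤ ∑' i, ENNReal.ofReal (negMulLog (q i)) := by
  have hq_tail : ∀ i ∉ range N, q i = 0 := fun i hi =>
    le_antisymm (hqN ▸ hqa (not_lt.1 (mt mem_range.2 hi))) (hq0 i)
  have hqN1 : ∑ i ∈ range N, q i = 1 := by rw [← hq1, tsum_eq_sum hq_tail]
  have hpN1 : ∑ i ∈ range N, p i = 1 :=
    le_antisymm (hp1 ▸ hps.sum_le_tsum _ fun i _ => hp0 i) (hqN1 ▸ hmaj N)
  have hp_tail : ∀ i ∉ range N, p i = 0 := fun i hi => by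
    have h := hp1 ▸ hps.sum_le_tsum (insert i (range N)) fun j _ => hp0 j
    rw [sum_insert hi, hpN1] at h
    linarith [hp0 i]
  have hfin := sum_range_negMulLog_le_of_majorizes (C := -log (q (N - 1))) hp0 hqa
    (fun k _ => hmaj k) hq fun i hi =>
      neg_le_neg (log_le_log (hq _ (by omega)) (hqa (by omega)))
  rw [hpN1, hqN1, sub_self, mul_zero, add_zero] at hfin
  calc ∑' i, ENNReal.ofReal (negMulLog (p i))
      = ∑ i ∈ range N, ENNReal.ofReal (negMulLog (p i)) :=
        tsum_eq_sum fun i hi => by simp [hp_tail i hi]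
    _ ≤ ∑ i ∈ range N, ENNReal.ofReal (negMulLog (q i)) := by
        rw [sum_ofReal_negMulLog_eq hp0 hps hp1, sum_ofReal_negMulLog_eq hq0 hqs hq1]
        exact ENNReal.ofReal_le_ofReal hfin
    _ ≤ ∑' i, ENNReal.ofReal (negMulLog (q i)) := ENNReal.sum_le_tsum _

theorem stmt5 (p q : ℕ → ℝ)
    (hp0 : ∀ i, 0 ≤ p i) (hq0 : ∀ i, 0 ≤ q i)
    (hqa : Antitone q)
    (hps : Summable p) (hqs : Summable q)
    (hp1 : (∑' i, p i) = 1) (hq1 : (∑' i, q i) = 1)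
    (hmaj : ∀ k : ℕ, (∑ i ∈ Finset.range k, q i) ≤ ∑ i ∈ Finset.range k, p i) :
    (∑' i, ENNReal.ofReal (Real.negMulLog (p i))) ≤
      ∑' i, ENNReal.ofReal (Real.negMulLog (q i)) := by
  by_cases hzero : ∃ N, q N = 0
  · classical
    exact tsum_ofReal_negMulLog_le_of_eq_zero hp0 hq0 hqa hps hqs hp1 hq1 hmaj
      (Nat.find_spec hzero) fun i hi => (hq0 i).lt_of_ne' (Nat.find_min hzero hi)
  · rw [ENNReal.tsum_eq_iSup_nat]
    exact iSup_le fun m => sum_range_ofReal_negMulLog_le_of_pos hp0 hq0 hqa hps hqs hp1 hq1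
      hmaj ((hq0 m).lt_of_ne' fun h => hzero ⟨m, h⟩)
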